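/- Let κ be a nonempty partition and let q, t be real numbers with 0 < q < 1 and 0 < t < 1. Then u_κ(q,t)/h_κ(q,t) = − t^{−n(κ)} q^{−n(κ′)−|κ|} ((1 − q^{|κ|})/(1 − t^{|κ|})) · u_{κ′}(t^{−1},q^{−1})/h_{κ′}(t^{−1},q^{−1}), where u_{κ′}(t^{−1},q^{−1}) and h_{κ′}(t^{−1},q^{−1}) denote u and h for the conjugate partition evaluated at the pair of arguments (t^{−1}, q^{−1}); all denominators appearing are nonzero. -/

import Mathlib

/-- The arm length `a(s) = κ_i − j` of the cell `s = (i,j)` (zero-indexed) of a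
Young diagram. -/
def armLen (μ : YoungDiagram) (c : ℕ × ℕ) : ℕ := μ.rowLen c.1 - (c.2 + 1)

/-- The leg length `l(s) = κ′_j − i` of the cell `s = (i,j)` (zero-indexed) of a
Young diagram. -/
def legLen (μ : YoungDiagram) (c : ℕ × ℕ) : ℕ := μ.colLen c.2 - (c.1 + 1)

/-- The statistic `n(κ) = ∑_i (i−1)κ_i`, i.e. the sum over all cells of the
(zero-indexed) row index. -/
def nStat (μ : YoungDiagram) : ℕ := ∑ c ∈ μ.cells, c.1

/-- `h_κ(q,t) := ∏_{s∈κ} (1 − q^{a(s)} t^{l(s)+1})`. -/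
noncomputable def hQT (μ : YoungDiagram) (q t : ℝ) : ℝ :=
  ∏ c ∈ μ.cells, (1 - q ^ armLen μ c * t ^ (legLen μ c + 1))

/-- `h′_κ(q,t) := ∏_{s∈κ} (1 − q^{a(s)+1} t^{l(s)})`. -/
noncomputable def h'QT (μ : YoungDiagram) (q t : ℝ) : ℝ :=
  ∏ c ∈ μ.cells, (1 - q ^ (armLen μ c + 1) * t ^ legLen μ c)

/-- `χ_κ(q,t) := ∏_{s=(i,j)∈κ, s≠(1,1)} (t^{i−1} − q^{j−1})`, with cells zero-indexed. -/
noncomputable def chiQT (μ : YoungDiagram) (q t : ℝ) : ℝ :=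
  ∏ c ∈ μ.cells.erase (0, 0), (t ^ c.1 - q ^ c.2)

/-- `u_κ(q,t) := (1 − q^{|κ|}) χ_κ(q,t) / h′_κ(q,t)`. -/
noncomputable def uQT (μ : YoungDiagram) (q t : ℝ) : ℝ :=
  (1 - q ^ μ.cells.card) * chiQT μ q t / h'QT μ q t


section Aux

lemma cells_transpose (μ : YoungDiagram) :
    μ.transpose.cells = μ.cells.map (Equiv.prodComm ℕ ℕ).toEmbedding := by
  ext c
  simp only [Finset.mem_map, Equiv.coe_toEmbedding, Equiv.prodComm_apply,
    YoungDiagram.mem_cells, YoungDiagram.mem_transpose]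
  constructor
  · intro h; exact ⟨c.swap, h, Prod.swap_swap c⟩
  · rintro ⟨a, ha, rfl⟩; simpa using ha

lemma armLen_transpose (μ : YoungDiagram) (c : ℕ × ℕ) :
    armLen μ.transpose c = legLen μ c.swap := by
  simp [armLen, legLen, YoungDiagram.rowLen_transpose]

lemma legLen_transpose (μ : YoungDiagram) (c : ℕ × ℕ) :
    legLen μ.transpose c = armLen μ c.swap := by
  simp [armLen, legLen, YoungDiagram.colLen_transpose]

lemma sum_arm (μ : YoungDiagram) : ∑ c ∈ μ.cells, armLen μ c = ∑ c ∈ μ.cells, c.2 := by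
  refine Finset.sum_nbij' (fun c => (c.1, μ.rowLen c.1 - (c.2 + 1)))
    (fun c => (c.1, μ.rowLen c.1 - (c.2 + 1))) ?_ ?_ ?_ ?_ ?_
  · intro c hc
    have h : c.2 < μ.rowLen c.1 := by
      rw [← YoungDiagram.mem_iff_lt_rowLen]; simpa using hc
    simp only [YoungDiagram.mem_cells, YoungDiagram.mem_iff_lt_rowLen] at *
    omega
  · intro c hc
    have h : c.2 < μ.rowLen c.1 := by
      rw [← YoungDiagram.mem_iff_lt_rowLen]; simpa using hc
    simp only [YoungDiagram.mem_cells, YoungDiagram.mem_iff_lt_rowLen] at *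
    omega
  · intro c hc
    have h : c.2 < μ.rowLen c.1 := by
      rw [← YoungDiagram.mem_iff_lt_rowLen]; simpa using hc
    ext <;> simp <;> omega
  · intro c hc
    have h : c.2 < μ.rowLen c.1 := by
      rw [← YoungDiagram.mem_iff_lt_rowLen]; simpa using hc
    ext <;> simp <;> omega
  · intro c hc; rfl

lemma card_transpose (μ : YoungDiagram) : μ.transpose.cells.card = μ.cells.card := by
  rw [cells_transpose, Finset.card_map]

lemma nStat_transpose (μ : YoungDiagram) : nStat μ.transpose = ∑ c ∈ μ.cells, c.2 := by
  rw [nStat, cells_transpose, Finset.sum_map]; rfl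

lemma sum_leg (μ : YoungDiagram) : ∑ c ∈ μ.cells, legLen μ c = nStat μ := by
  have h1 : ∑ c ∈ μ.cells, legLen μ c = ∑ c ∈ μ.transpose.cells, armLen μ.transpose c := by
    rw [cells_transpose, Finset.sum_map]
    refine Finset.sum_congr rfl fun c _ => ?_
    simp [armLen_transpose]
  rw [h1, sum_arm, cells_transpose, Finset.sum_map, nStat]
  rfl

lemma hQT_pos (μ : YoungDiagram) {q t : ℝ} (hq0 : 0 < q) (hq1 : q < 1)
    (ht0 : 0 < t) (ht1 : t < 1) : 0 < hQT μ q t := by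
  refine Finset.prod_pos fun c _ => ?_
  have h1 : q ^ armLen μ c ≤ 1 := pow_le_one₀ hq0.le hq1.le
  have h2 : t ^ (legLen μ c + 1) < 1 := pow_lt_one₀ ht0.le ht1 (Nat.succ_ne_zero _)
  nlinarith [pow_pos hq0 (armLen μ c), pow_pos ht0 (legLen μ c + 1)]

lemma h'QT_pos (μ : YoungDiagram) {q t : ℝ} (hq0 : 0 < q) (hq1 : q < 1)
    (ht0 : 0 < t) (ht1 : t < 1) : 0 < h'QT μ q t := by
  refine Finset.prod_pos fun c _ => ?_
  have h1 : q ^ (armLen μ c + 1) < 1 := pow_lt_one₀ hq0.le hq1 (Nat.succ_ne_zero _)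
  have h2 : t ^ legLen μ c ≤ 1 := pow_le_one₀ ht0.le ht1.le
  nlinarith [pow_pos hq0 (armLen μ c + 1), pow_pos ht0 (legLen μ c)]

lemma keyA (μ : YoungDiagram) {q t : ℝ} (hq : q ≠ 0) (ht : t ≠ 0) :
    t ^ nStat μ * q ^ (nStat μ.transpose + μ.cells.card) * hQT μ.transpose t⁻¹ q⁻¹
      = (-1 : ℝ) ^ μ.cells.card * h'QT μ q t := by
  have h1 : hQT μ.transpose t⁻¹ q⁻¹
      = ∏ c ∈ μ.cells, (1 - t⁻¹ ^ legLen μ c * q⁻¹ ^ (armLen μ c + 1)) := by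
    rw [hQT, cells_transpose, Finset.prod_map]
    refine Finset.prod_congr rfl fun c _ => ?_
    simp [armLen_transpose, legLen_transpose]
  have h2 : nStat μ.transpose + μ.cells.card = ∑ c ∈ μ.cells, (armLen μ c + 1) := by
    rw [Finset.sum_add_distrib, sum_arm, ← nStat_transpose]; simp
  rw [h1, h2, ← sum_leg, ← Finset.prod_pow_eq_pow_sum, ← Finset.prod_pow_eq_pow_sum,
    h'QT, ← Finset.prod_const (b := (-1 : ℝ)), ← Finset.prod_mul_distrib,
    ← Finset.prod_mul_distrib, ← Finset.prod_mul_distrib]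
  refine Finset.prod_congr rfl fun c _ => ?_
  have hqp : q ^ (armLen μ c + 1) ≠ 0 := pow_ne_zero _ hq
  have htp : t ^ legLen μ c ≠ 0 := pow_ne_zero _ ht
  simp only [inv_pow]
  field_simp
  ring

lemma keyB (μ : YoungDiagram) {q t : ℝ} (hq : q ≠ 0) (ht : t ≠ 0) :
    t ^ (nStat μ + μ.cells.card) * q ^ nStat μ.transpose * h'QT μ.transpose t⁻¹ q⁻¹
      = (-1 : ℝ) ^ μ.cells.card * hQT μ q t := by
  have h1 : h'QT μ.transpose t⁻¹ q⁻¹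
      = ∏ c ∈ μ.cells, (1 - t⁻¹ ^ (legLen μ c + 1) * q⁻¹ ^ armLen μ c) := by
    rw [h'QT, cells_transpose, Finset.prod_map]
    refine Finset.prod_congr rfl fun c _ => ?_
    simp [armLen_transpose, legLen_transpose]
  have h2 : nStat μ + μ.cells.card = ∑ c ∈ μ.cells, (legLen μ c + 1) := by
    rw [Finset.sum_add_distrib, sum_leg]; simp
  rw [h1, h2, show nStat μ.transpose = ∑ c ∈ μ.cells, armLen μ c by
      rw [sum_arm, nStat_transpose],
    ← Finset.prod_pow_eq_pow_sum, ← Finset.prod_pow_eq_pow_sum,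
    hQT, ← Finset.prod_const (b := (-1 : ℝ)), ← Finset.prod_mul_distrib,
    ← Finset.prod_mul_distrib, ← Finset.prod_mul_distrib]
  refine Finset.prod_congr rfl fun c _ => ?_
  have hqp : q ^ armLen μ c ≠ 0 := pow_ne_zero _ hq
  have htp : t ^ (legLen μ c + 1) ≠ 0 := pow_ne_zero _ ht
  simp only [inv_pow]
  field_simp
  ring

lemma keyC (μ : YoungDiagram) {q t : ℝ} (hq : q ≠ 0) (ht : t ≠ 0) :
    t ^ nStat μ * q ^ nStat μ.transpose * chiQT μ.transpose t⁻¹ q⁻¹ = chiQT μ q t := by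
  have h0 : μ.transpose.cells.erase (0, 0)
      = (μ.cells.erase (0, 0)).map (Equiv.prodComm ℕ ℕ).toEmbedding := by
    rw [cells_transpose]
    exact (Finset.map_erase (Equiv.prodComm ℕ ℕ).toEmbedding μ.cells ((0, 0) : ℕ × ℕ)).symm
  have h1 : chiQT μ.transpose t⁻¹ q⁻¹
      = ∏ c ∈ μ.cells.erase (0, 0), (q⁻¹ ^ c.2 - t⁻¹ ^ c.1) := by
    rw [chiQT, h0, Finset.prod_map]; rfl
  have h2 : nStat μ = ∑ c ∈ μ.cells.erase (0, 0), c.1 := by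
    rw [nStat]
    exact (Finset.sum_erase (a := ((0, 0) : ℕ × ℕ)) (f := fun c : ℕ × ℕ => c.1) μ.cells rfl).symm
  have h3 : nStat μ.transpose = ∑ c ∈ μ.cells.erase (0, 0), c.2 := by
    rw [nStat_transpose]
    exact (Finset.sum_erase (a := ((0, 0) : ℕ × ℕ)) (f := fun c : ℕ × ℕ => c.2) μ.cells rfl).symm
  rw [h1, h2, h3, ← Finset.prod_pow_eq_pow_sum, ← Finset.prod_pow_eq_pow_sum, chiQT,
    ← Finset.prod_mul_distrib, ← Finset.prod_mul_distrib]
  refine Finset.prod_congr rfl fun c _ => ?_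
  have hqp : q ^ c.2 ≠ 0 := pow_ne_zero _ hq
  have htp : t ^ c.1 ≠ 0 := pow_ne_zero _ ht
  simp only [inv_pow]
  field_simp

end Aux

/-- For a nonempty partition `κ` and `0 < q < 1`, `0 < t < 1`:
`u_κ(q,t)/h_κ(q,t) = − t^{−n(κ)} q^{−n(κ′)−|κ|} ((1 − q^{|κ|})/(1 − t^{|κ|}))
  · u_{κ′}(t⁻¹,q⁻¹)/h_{κ′}(t⁻¹,q⁻¹)`. -/

theorem u_over_h_inverse_conjugate (μ : YoungDiagram) (hμ : μ.cells.Nonempty) (q t : ℝ)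
    (hq0 : 0 < q) (hq1 : q < 1) (ht0 : 0 < t) (ht1 : t < 1) :
    uQT μ q t / hQT μ q t =
      -((t ^ nStat μ)⁻¹ * (q ^ (nStat μ.transpose + μ.cells.card))⁻¹ *
        ((1 - q ^ μ.cells.card) / (1 - t ^ μ.cells.card)) *
        (uQT μ.transpose t⁻¹ q⁻¹ / hQT μ.transpose t⁻¹ q⁻¹)) := by
  have hq : q ≠ 0 := hq0.ne'
  have ht : t ≠ 0 := ht0.ne'
  have hH : hQT μ q t ≠ 0 := (hQT_pos μ hq0 hq1 ht0 ht1).ne'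
  have hHp : h'QT μ q t ≠ 0 := (h'QT_pos μ hq0 hq1 ht0 ht1).ne'
  have hn : 0 < μ.cells.card := Finset.card_pos.mpr hμ
  have htn : 1 - t ^ μ.cells.card ≠ 0 := by
    have := pow_lt_one₀ ht0.le ht1 hn.ne'
    intro h; nlinarith
  have htS : (t : ℝ) ^ nStat μ ≠ 0 := pow_ne_zero _ ht
  have hqS : (q : ℝ) ^ (nStat μ.transpose + μ.cells.card) ≠ 0 := pow_ne_zero _ hq
  have hqS' : (q : ℝ) ^ nStat μ.transpose ≠ 0 := pow_ne_zero _ hq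
  have htS' : (t : ℝ) ^ (nStat μ + μ.cells.card) ≠ 0 := pow_ne_zero _ ht
  have hA := keyA μ hq ht
  have hB := keyB μ hq ht
  have hC := keyC μ hq ht
  have hH' : hQT μ.transpose t⁻¹ q⁻¹ =
      (-1 : ℝ) ^ μ.cells.card * h'QT μ q t /
        (t ^ nStat μ * q ^ (nStat μ.transpose + μ.cells.card)) := by
    rw [eq_div_iff (by positivity)]; linarith [hA]
  have hHp' : h'QT μ.transpose t⁻¹ q⁻¹ =
      (-1 : ℝ) ^ μ.cells.card * hQT μ q t /
        (t ^ (nStat μ + μ.cells.card) * q ^ nStat μ.transpose) := by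
    rw [eq_div_iff (by positivity)]; linarith [hB]
  have hX' : chiQT μ.transpose t⁻¹ q⁻¹ =
      chiQT μ q t / (t ^ nStat μ * q ^ nStat μ.transpose) := by
    rw [eq_div_iff (by positivity)]; linarith [hC]
  rw [uQT, uQT, hH', hHp', hX', card_transpose]
  rcases Nat.even_or_odd μ.cells.card with hpar | hpar
  · rw [hpar.neg_one_pow]
    simp only [inv_pow]
    field_simp
    ring
  · rw [hpar.neg_one_pow]
    simp only [inv_pow]
    field_simp
    ring
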